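/- arXiv:2506.00286 — 5 statements merged into one kernel-verified Lean document; each statement's English description precedes it below -/
import Mathlib

section
/- The entropic risk Bellman optimality operator is a γ-contraction in the max-norm: for a finite MDP with states S, actions A, transition kernel P, rewards R, discount γ ∈ (0,1), and risk parameter β ≠ 0, define (Tf)(s,a) = R(s,a) - (γ/β)·log(Σ_{s'} P(s'|s,a)·exp(-β·max_{a'} f(s',a'))). Then for any f₁, f₂ : S×A → ℝ, ‖Tf₁ - Tf₂‖_∞ ≤ γ·‖f₁ - f₂‖_∞. -/
open Finset

lemma erm_sum_pos {S : Type*} [Fintype S] (p : S → ℝ) (hp0 : ∀ s, 0 ≤ p s)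
    (hp1 : ∑ s, p s = 1) (g : S → ℝ) : 0 < ∑ s, p s * Real.exp (g s) := by
  have h : ∃ s ∈ Finset.univ (α := S), 0 < p s := by
    by_contra h
    push_neg at h
    have : ∑ s, p s = 0 := Finset.sum_eq_zero fun s hs => le_antisymm (h s hs) (hp0 s)
    rw [this] at hp1; norm_num at hp1
  obtain ⟨s₀, _, hs₀⟩ := h
  refine Finset.sum_pos' (fun s _ => mul_nonneg (hp0 s) (Real.exp_pos _).le) ?_
  exact ⟨s₀, Finset.mem_univ s₀, mul_pos hs₀ (Real.exp_pos _)⟩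

lemma erm_one_sided {S : Type*} [Fintype S] (p : S → ℝ) (hp0 : ∀ s, 0 ≤ p s)
    (hp1 : ∑ s, p s = 1) (β : ℝ) (hβ : β ≠ 0) (x y : S → ℝ) (c : ℝ)
    (hc : ∀ s, x s ≤ y s + c) :
    -(1/β) * Real.log (∑ s, p s * Real.exp (-β * x s)) ≤
      -(1/β) * Real.log (∑ s, p s * Real.exp (-β * y s)) + c := by
  have hSx := erm_sum_pos p hp0 hp1 (fun s => -β * x s)
  have hSy := erm_sum_pos p hp0 hp1 (fun s => -β * y s)
  rcases lt_or_gt_of_ne hβ with hβneg | hβpos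
  · -- β < 0 : exp(-β x s) ≤ exp(-β c) * exp(-β y s)
    have key : ∑ s, p s * Real.exp (-β * x s) ≤
        Real.exp (-β * c) * ∑ s, p s * Real.exp (-β * y s) := by
      rw [Finset.mul_sum]
      refine Finset.sum_le_sum fun s _ => ?_
      have : Real.exp (-β * x s) ≤ Real.exp (-β * c) * Real.exp (-β * y s) := by
        rw [← Real.exp_add]
        apply Real.exp_le_exp.mpr
        nlinarith [hc s]
      calc p s * Real.exp (-β * x s) ≤ p s * (Real.exp (-β * c) * Real.exp (-β * y s)) :=
            mul_le_mul_of_nonneg_left this (hp0 s)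
        _ = Real.exp (-β * c) * (p s * Real.exp (-β * y s)) := by ring
    have hlog : Real.log (∑ s, p s * Real.exp (-β * x s)) ≤
        -β * c + Real.log (∑ s, p s * Real.exp (-β * y s)) := by
      have := Real.log_le_log hSx key
      rwa [Real.log_mul (Real.exp_pos _).ne' hSy.ne', Real.log_exp] at this
    have hinv : 0 < -(1/β) := neg_pos.mpr (one_div_neg.mpr hβneg)
    calc -(1/β) * Real.log (∑ s, p s * Real.exp (-β * x s))
        ≤ -(1/β) * (-β * c + Real.log (∑ s, p s * Real.exp (-β * y s))) :=
          mul_le_mul_of_nonneg_left hlog hinv.le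
      _ = -(1/β) * Real.log (∑ s, p s * Real.exp (-β * y s)) + c := by
          field_simp; ring
  · -- β > 0 : exp(-β x s) ≥ exp(-β c) * exp(-β y s)
    have key : Real.exp (-β * c) * ∑ s, p s * Real.exp (-β * y s) ≤
        ∑ s, p s * Real.exp (-β * x s) := by
      rw [Finset.mul_sum]
      refine Finset.sum_le_sum fun s _ => ?_
      have : Real.exp (-β * c) * Real.exp (-β * y s) ≤ Real.exp (-β * x s) := by
        rw [← Real.exp_add]
        apply Real.exp_le_exp.mpr
        nlinarith [hc s]
      calc Real.exp (-β * c) * (p s * Real.exp (-β * y s))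
          = p s * (Real.exp (-β * c) * Real.exp (-β * y s)) := by ring
        _ ≤ p s * Real.exp (-β * x s) := mul_le_mul_of_nonneg_left this (hp0 s)
    have hlog : -β * c + Real.log (∑ s, p s * Real.exp (-β * y s)) ≤
        Real.log (∑ s, p s * Real.exp (-β * x s)) := by
      have := Real.log_le_log (mul_pos (Real.exp_pos _) hSy) key
      rwa [Real.log_mul (Real.exp_pos _).ne' hSy.ne', Real.log_exp (-β * c)] at this
    have hinv : (0:ℝ) < 1/β := by positivity
    have h2 := mul_le_mul_of_nonneg_left hlog hinv.le
    have h3 : (1/β) * (-β * c + Real.log (∑ s, p s * Real.exp (-β * y s)))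
        = (1/β) * Real.log (∑ s, p s * Real.exp (-β * y s)) - c := by
      field_simp; ring
    rw [h3] at h2
    linarith

theorem erm_bellman_optimality_contraction
    {S A : Type*} [Fintype S] [Fintype A] [Nonempty S] [Nonempty A]
    (P : S → A → S → ℝ) (hP0 : ∀ s a s', 0 ≤ P s a s') (hP1 : ∀ s a, ∑ s', P s a s' = 1)
    (R : S → A → ℝ) (hR : ∀ s a, R s a ∈ Set.Icc (0:ℝ) 1)
    (γ β : ℝ) (hγ : γ ∈ Set.Ioo (0:ℝ) 1) (hβ : β ≠ 0)
    (T : (S × A → ℝ) → (S × A → ℝ))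
    (hT : ∀ f s a, T f (s, a) =
      R s a - γ / β * Real.log (∑ s', P s a s' * Real.exp (-β * ⨆ a', f (s', a'))))
    (f₁ f₂ : S × A → ℝ) :
    ‖T f₁ - T f₂‖ ≤ γ * ‖f₁ - f₂‖ := by
  obtain ⟨hγ0, hγ1⟩ := hγ
  have hnn : 0 ≤ γ * ‖f₁ - f₂‖ := mul_nonneg hγ0.le (norm_nonneg _)
  rw [pi_norm_le_iff_of_nonneg hnn]
  rintro ⟨s, a⟩
  -- sup bounds
  have hsup : ∀ (g h : S × A → ℝ) (s' : S),
      (⨆ a', g (s', a')) ≤ (⨆ a', h (s', a')) + ‖g - h‖ := by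
    intro g h s'
    refine ciSup_le fun a' => ?_
    have h1 : g (s', a') - h (s', a') ≤ ‖g - h‖ := by
      have := norm_le_pi_norm (g - h) (s', a')
      simp only [Pi.sub_apply, Real.norm_eq_abs] at this
      exact (abs_le.mp this).2
    have h2 : h (s', a') ≤ ⨆ a'', h (s', a'') :=
      le_ciSup (f := fun a'' => h (s', a'')) (Set.Finite.bddAbove (Set.finite_range _)) a'
    linarith
  set x : S → ℝ := fun s' => ⨆ a', f₁ (s', a') with hx
  set y : S → ℝ := fun s' => ⨆ a', f₂ (s', a') with hy
  have h12 := erm_one_sided (P s a) (hP0 s a) (hP1 s a) β hβ x y ‖f₁ - f₂‖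
    (fun s' => hsup f₁ f₂ s')
  have h21 := erm_one_sided (P s a) (hP0 s a) (hP1 s a) β hβ y x ‖f₁ - f₂‖
    (fun s' => by simpa [← norm_sub_rev f₁ f₂] using hsup f₂ f₁ s')
  have hdiff : (T f₁ - T f₂) (s, a) =
      γ * ((-(1/β) * Real.log (∑ s', P s a s' * Real.exp (-β * x s'))) -
        (-(1/β) * Real.log (∑ s', P s a s' * Real.exp (-β * y s')))) := by
    simp only [Pi.sub_apply, hT]
    field_simp
    ring
  rw [hdiff, Real.norm_eq_abs, abs_mul, abs_of_pos hγ0]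
  apply mul_le_mul_of_nonneg_left _ hγ0.le
  rw [abs_sub_le_iff]
  constructor <;> linarith
end

section
/- The entropic risk policy evaluation operator is a γ-contraction in the max-norm: for a stationary deterministic policy π : S → A, define (T^π f)(s,a) = R(s,a) - (γ/β)·log(Σ_{s'} P(s'|s,a)·exp(-β·f(s',π(s')))). Then for any f₁, f₂ : S×A → ℝ, ‖T^π f₁ - T^π f₂‖_∞ ≤ γ·‖f₁ - f₂‖_∞. -/
open Finset

lemma log_sum_exp_shift {ι : Type*} [Fintype ι] (p : ι → ℝ)
    (hp0 : ∀ i, 0 ≤ p i) (hp1 : ∑ i, p i = 1)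
    (u v : ι → ℝ) (d : ℝ) (hd : ∀ i, u i ≤ v i + d) :
    Real.log (∑ i, p i * Real.exp (u i)) ≤ Real.log (∑ i, p i * Real.exp (v i)) + d := by
  have hpos : ∀ (w : ι → ℝ), 0 < ∑ i, p i * Real.exp (w i) := by
    intro w
    obtain ⟨j, hj⟩ : ∃ j, 0 < p j := by
      by_contra h
      push_neg at h
      have : ∑ i, p i = 0 := Finset.sum_eq_zero (fun i _ => le_antisymm (h i) (hp0 i))
      rw [this] at hp1; norm_num at hp1
    exact Finset.sum_pos' (fun i _ => mul_nonneg (hp0 i) (Real.exp_pos _).le)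
      ⟨j, Finset.mem_univ j, mul_pos hj (Real.exp_pos _)⟩
  have hle : ∑ i, p i * Real.exp (u i) ≤ Real.exp d * ∑ i, p i * Real.exp (v i) := by
    rw [Finset.mul_sum]
    apply Finset.sum_le_sum
    intro i _
    have h1 : Real.exp (u i) ≤ Real.exp d * Real.exp (v i) := by
      rw [← Real.exp_add]
      exact Real.exp_le_exp.mpr (by linarith [hd i])
    calc p i * Real.exp (u i) ≤ p i * (Real.exp d * Real.exp (v i)) :=
          mul_le_mul_of_nonneg_left h1 (hp0 i)
      _ = Real.exp d * (p i * Real.exp (v i)) := by ring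
  calc Real.log (∑ i, p i * Real.exp (u i))
      ≤ Real.log (Real.exp d * ∑ i, p i * Real.exp (v i)) :=
        Real.log_le_log (hpos u) hle
    _ = d + Real.log (∑ i, p i * Real.exp (v i)) := by
        rw [Real.log_mul (Real.exp_ne_zero d) (hpos v).ne', Real.log_exp]
    _ = _ := by ring

theorem erm_policy_evaluation_contraction
    {S A : Type*} [Fintype S] [Fintype A] [Nonempty S] [Nonempty A]
    (P : S → A → S → ℝ) (hP0 : ∀ s a s', 0 ≤ P s a s') (hP1 : ∀ s a, ∑ s', P s a s' = 1)
    (R : S → A → ℝ) (hR : ∀ s a, R s a ∈ Set.Icc (0:ℝ) 1)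
    (γ β : ℝ) (hγ : γ ∈ Set.Ioo (0:ℝ) 1) (hβ : β ≠ 0)
    (π : S → A)
    (Tπ : (S × A → ℝ) → (S × A → ℝ))
    (hTπ : ∀ f s a, Tπ f (s, a) =
      R s a - γ / β * Real.log (∑ s', P s a s' * Real.exp (-β * f (s', π s'))))
    (f₁ f₂ : S × A → ℝ) :
    ‖Tπ f₁ - Tπ f₂‖ ≤ γ * ‖f₁ - f₂‖ := by
  obtain ⟨hγ0, hγ1⟩ := hγ
  set c := ‖f₁ - f₂‖ with hc
  have hc0 : 0 ≤ c := norm_nonneg _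
  rw [pi_norm_le_iff_of_nonneg (by positivity)]
  rintro ⟨s, a⟩
  have hbd : ∀ i : S, |(-β * f₁ (i, π i)) - (-β * f₂ (i, π i))| ≤ |β| * c := by
    intro i
    have h1 : ‖(f₁ - f₂) (i, π i)‖ ≤ c := norm_le_pi_norm (f₁ - f₂) (i, π i)
    have h2 : |f₁ (i, π i) - f₂ (i, π i)| ≤ c := by
      simpa [Real.norm_eq_abs] using h1
    have h3 : (-β * f₁ (i, π i)) - (-β * f₂ (i, π i)) = (-β) * (f₁ (i, π i) - f₂ (i, π i)) := by
      ring
    rw [h3, abs_mul, abs_neg]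
    exact mul_le_mul_of_nonneg_left h2 (abs_nonneg β)
  set L₁ := Real.log (∑ s', P s a s' * Real.exp (-β * f₁ (s', π s'))) with hL1
  set L₂ := Real.log (∑ s', P s a s' * Real.exp (-β * f₂ (s', π s'))) with hL2
  have hlog : |L₁ - L₂| ≤ |β| * c := by
    rw [abs_sub_le_iff]
    constructor
    · have hd : ∀ i : S, -β * f₁ (i, π i) ≤ -β * f₂ (i, π i) + |β| * c := fun i => by
        have := abs_le.mp (hbd i); linarith [this.1, this.2]
      have := log_sum_exp_shift (P s a) (hP0 s a) (hP1 s a)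
        (fun i => -β * f₁ (i, π i)) (fun i => -β * f₂ (i, π i)) (|β| * c) hd
      linarith
    · have hd : ∀ i : S, -β * f₂ (i, π i) ≤ -β * f₁ (i, π i) + |β| * c := fun i => by
        have := abs_le.mp (hbd i); linarith [this.1, this.2]
      have := log_sum_exp_shift (P s a) (hP0 s a) (hP1 s a)
        (fun i => -β * f₂ (i, π i)) (fun i => -β * f₁ (i, π i)) (|β| * c) hd
      linarith
  have heq : (Tπ f₁ - Tπ f₂) (s, a) = -(γ / β) * (L₁ - L₂) := by
    simp only [Pi.sub_apply, hTπ f₁ s a, hTπ f₂ s a]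
    ring
  rw [Real.norm_eq_abs, heq, abs_mul, abs_neg, abs_div]
  have : |γ| = γ := abs_of_pos hγ0
  rw [this]
  rw [div_mul_eq_mul_div, div_le_iff₀ (abs_pos.mpr hβ)]
  calc γ * |L₁ - L₂| ≤ γ * (|β| * c) := mul_le_mul_of_nonneg_left hlog hγ0.le
    _ = γ * c * |β| := by ring
end

section
/- Performance bound for greedy policies under entropic risk: let V* be the optimal value function of a finite discounted MDP with entropic risk (satisfying the Bellman optimality equation V*(s) = max_a [R(s,a) + γ·ρ_{s,a}(V*)], where ρ_{s,a}(V) = -(1/β)·log(Σ_{s'} P(s'|s,a)·exp(-β·V(s')))). Let V̄ : S → ℝ satisfy ‖V* - V̄‖_∞ < α for some α > 0, and let π_G(s) ∈ argmax_a [R(s,a) + γ·ρ_{s,a}(V̄)] be a greedy policy w.r.t. V̄, with value function V^{π_G} satisfying the policy Bellman equation V^{π_G}(s) = R(s,π_G(s)) + γ·ρ_{s,π_G(s)}(V^{π_G}). Then ‖V* - V^{π_G}‖_∞ ≤ 2γα/(1-γ). -/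
open Finset

theorem erm_greedy_policy_performance
    {S A : Type*} [Fintype S] [Fintype A] [Nonempty S] [Nonempty A]
    (P : S → A → S → ℝ) (hP0 : ∀ s a s', 0 ≤ P s a s') (hP1 : ∀ s a, ∑ s', P s a s' = 1)
    (R : S → A → ℝ)
    (γ β : ℝ) (hγ : γ ∈ Set.Ioo (0:ℝ) 1) (hβ : β ≠ 0)
    (ρ : S → A → (S → ℝ) → ℝ)
    (hρ : ∀ s a V, ρ s a V = -(1/β) * Real.log (∑ s', P s a s' * Real.exp (-β * V s')))
    (α : ℝ) (hα : 0 < α)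
    (Vstar : S → ℝ) (hVstar : ∀ s, Vstar s = ⨆ a, (R s a + γ * ρ s a Vstar))
    (Vbar : S → ℝ) (hVbar : ‖Vstar - Vbar‖ < α)
    (πG : S → A)
    (hgreedy : ∀ s, R s (πG s) + γ * ρ s (πG s) Vbar = ⨆ a, (R s a + γ * ρ s a Vbar))
    (VG : S → ℝ) (hVG : ∀ s, VG s = R s (πG s) + γ * ρ s (πG s) VG) :
    ‖Vstar - VG‖ ≤ 2 * γ * α / (1 - γ) := by
  obtain ⟨hγ0, hγ1⟩ := hγ
  -- positivity of the sums
  have hpos : ∀ (s : S) (a : A) (W : S → ℝ),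
      0 < ∑ s', P s a s' * Real.exp (-β * W s') := by
    intro s a W
    have hex : ∃ s', 0 < P s a s' := by
      by_contra h'
      push_neg at h'
      have hle : ∑ s', P s a s' ≤ 0 := Finset.sum_nonpos (fun i _ => h' i)
      have := hP1 s a
      linarith
    obtain ⟨s0, hs0⟩ := hex
    refine Finset.sum_pos' (fun i _ => mul_nonneg (hP0 s a i) (Real.exp_pos _).le)
      ⟨s0, Finset.mem_univ _, mul_pos hs0 (Real.exp_pos _)⟩
  -- one-sided Lipschitz property of ρ
  have key : ∀ (s : S) (a : A) (U V : S → ℝ) (c : ℝ),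
      (∀ s', U s' ≤ V s' + c) → ρ s a U ≤ ρ s a V + c := by
    intro s a U V c h
    rw [hρ, hρ]
    have hU := hpos s a U
    have hV := hpos s a V
    rcases lt_or_gt_of_ne hβ with hb | hb
    · -- β < 0 : exp (-β U) ≤ exp (-β c) * exp (-β V)
      have hsum : (∑ s', P s a s' * Real.exp (-β * U s')) ≤
          Real.exp (-β * c) * ∑ s', P s a s' * Real.exp (-β * V s') := by
        rw [Finset.mul_sum]
        refine Finset.sum_le_sum (fun i _ => ?_)
        rw [← mul_assoc, mul_comm (Real.exp _) (P s a i), mul_assoc, ← Real.exp_add]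
        refine mul_le_mul_of_nonneg_left (Real.exp_le_exp.2 ?_) (hP0 s a i)
        nlinarith [h i]
      have hlog := Real.log_le_log hU hsum
      rw [Real.log_mul (Real.exp_ne_zero _) (ne_of_gt hV), Real.log_exp] at hlog
      have ht : (0:ℝ) ≤ -(1/β) := neg_nonneg.2 (le_of_lt (one_div_neg.2 hb))
      have h2 := mul_le_mul_of_nonneg_left hlog ht
      have h3 : -(1/β) * (-β*c + Real.log (∑ s', P s a s' * Real.exp (-β * V s')))
          = c + -(1/β) * Real.log (∑ s', P s a s' * Real.exp (-β * V s')) := by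
        field_simp; ring
      rw [h3] at h2
      linarith
    · -- β > 0 : exp (-β c) * exp (-β V) ≤ exp (-β U)
      have hsum : Real.exp (-β * c) * (∑ s', P s a s' * Real.exp (-β * V s')) ≤
          ∑ s', P s a s' * Real.exp (-β * U s') := by
        rw [Finset.mul_sum]
        refine Finset.sum_le_sum (fun i _ => ?_)
        rw [← mul_assoc, mul_comm (Real.exp _) (P s a i), mul_assoc, ← Real.exp_add]
        refine mul_le_mul_of_nonneg_left (Real.exp_le_exp.2 ?_) (hP0 s a i)
        nlinarith [h i]
      have hlog := Real.log_le_log (mul_pos (Real.exp_pos _) hV) hsum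
      rw [Real.log_mul (Real.exp_ne_zero _) (ne_of_gt hV), Real.log_exp] at hlog
      have ht : (0:ℝ) ≤ 1/β := le_of_lt (one_div_pos.2 hb)
      have h2 := mul_le_mul_of_nonneg_left hlog ht
      have h3 : (1/β) * (-β*c + Real.log (∑ s', P s a s' * Real.exp (-β * V s')))
          = -c + (1/β) * Real.log (∑ s', P s a s' * Real.exp (-β * V s')) := by
        field_simp
      rw [h3] at h2
      nlinarith
  -- two-sided Lipschitz property
  have lip : ∀ (s : S) (a : A) (U V : S → ℝ) (c : ℝ),
      (∀ s', |U s' - V s'| ≤ c) → |ρ s a U - ρ s a V| ≤ c := by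
    intro s a U V c h
    rw [abs_sub_le_iff]
    constructor
    · have := key s a U V c (fun s' => by have := abs_le.1 (h s'); linarith [this.2])
      linarith
    · have := key s a V U c (fun s' => by have := abs_le.1 (h s'); linarith [this.1])
      linarith
  set c := ‖Vstar - VG‖ with hc
  have hc0 : 0 ≤ c := norm_nonneg _
  -- pointwise bounds from norms
  have hVb : ∀ s', |Vstar s' - Vbar s'| ≤ α := by
    intro s'
    have h1 : ‖(Vstar - Vbar) s'‖ ≤ ‖Vstar - Vbar‖ := norm_le_pi_norm _ s'
    simp only [Pi.sub_apply, Real.norm_eq_abs] at h1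
    linarith
  have hVGc : ∀ s', |Vstar s' - VG s'| ≤ c := by
    intro s'
    have h1 : ‖(Vstar - VG) s'‖ ≤ ‖Vstar - VG‖ := norm_le_pi_norm _ s'
    simp only [Pi.sub_apply, Real.norm_eq_abs] at h1
    exact h1
  have hbVG : ∀ s', |Vbar s' - VG s'| ≤ α + c := by
    intro s'
    have h1 := hVb s'
    have h2 := hVGc s'
    calc |Vbar s' - VG s'| = |(Vstar s' - VG s') - (Vstar s' - Vbar s')| := by ring_nf
      _ ≤ |Vstar s' - VG s'| + |Vstar s' - Vbar s'| := abs_sub _ _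
      _ ≤ c + α := add_le_add h2 h1
      _ = α + c := by ring
  -- bound each |Vstar s - VG s|
  have main : ∀ s, |Vstar s - VG s| ≤ 2 * γ * α + γ * c := by
    intro s
    set f : A → ℝ := fun a => R s a + γ * ρ s a Vstar with hf
    set g : A → ℝ := fun a => R s a + γ * ρ s a Vbar with hg
    have hfg : ∀ a, |f a - g a| ≤ γ * α := by
      intro a
      have : f a - g a = γ * (ρ s a Vstar - ρ s a Vbar) := by simp [hf, hg]; ring
      rw [this, abs_mul, abs_of_pos hγ0]
      exact mul_le_mul_of_nonneg_left (lip s a Vstar Vbar α hVb) hγ0.le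
    have hbddf : BddAbove (Set.range f) := Finite.bddAbove_range f
    have hbddg : BddAbove (Set.range g) := Finite.bddAbove_range g
    have hsup : |(⨆ a, f a) - (⨆ a, g a)| ≤ γ * α := by
      rw [abs_sub_le_iff]
      constructor
      · rw [sub_le_iff_le_add]
        refine ciSup_le (fun a => ?_)
        have h1 := le_ciSup hbddg a
        have h2 := abs_le.1 (hfg a)
        linarith [h2.2]
      · rw [sub_le_iff_le_add]
        refine ciSup_le (fun a => ?_)
        have h1 := le_ciSup hbddf a
        have h2 := abs_le.1 (hfg a)
        linarith [h2.1]
    have hVGeq : |g (πG s) - VG s| ≤ γ * (α + c) := by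
      have : g (πG s) - VG s = γ * (ρ s (πG s) Vbar - ρ s (πG s) VG) := by
        rw [hVG s]; simp [hg]; ring
      rw [this, abs_mul, abs_of_pos hγ0]
      exact mul_le_mul_of_nonneg_left (lip s (πG s) Vbar VG (α + c) hbVG) hγ0.le
    have hVs : Vstar s = ⨆ a, f a := hVstar s
    have hgs : g (πG s) = ⨆ a, g a := hgreedy s
    calc |Vstar s - VG s|
        = |((⨆ a, f a) - (⨆ a, g a)) + (g (πG s) - VG s)| := by rw [hVs, hgs]; ring_nf
      _ ≤ |(⨆ a, f a) - (⨆ a, g a)| + |g (πG s) - VG s| := abs_add_le _ _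
      _ ≤ γ * α + γ * (α + c) := add_le_add hsup hVGeq
      _ = 2 * γ * α + γ * c := by ring
  have hcle : c ≤ 2 * γ * α + γ * c := by
    rw [hc]
    have hnn : (0:ℝ) ≤ 2 * γ * α + γ * c := by
      nlinarith [mul_nonneg hγ0.le hα.le, mul_nonneg hγ0.le hc0]
    refine (pi_norm_le_iff_of_nonneg hnn).2 (fun s => ?_)
    simp only [Pi.sub_apply, Real.norm_eq_abs]
    exact main s
  rw [le_div_iff₀ (by linarith : (0:ℝ) < 1 - γ)]
  nlinarith
end

section
/- Q-value gap in the hard MDP instance (risk-seeking case): let γ ∈ (0,1), β < 0, and define p = exp(-|β|/(1-γ)) and α = 8ε·|β|/(γ·(exp(|β|/(1-γ)) - 1)) for some ε with 0 < ε < (γ/(40|β|))·(1 - exp(-|β|/(1-γ))). For q ∈ [0,1] define Q(q) = (γ/|β|)·log(q·exp(|β|/(1-γ)) + 1 - q). Then Q(p+α) - Q(p) > 2ε. -/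
lemma half_le_log_aux (x : ℝ) (h0 : 0 ≤ x) (h1 : x ≤ 1) : x / 2 ≤ Real.log (1 + x) := by
  rw [Real.le_log_iff_exp_le (by linarith)]
  have h2 := Real.add_one_le_exp (-(x / 2))
  have h3 : Real.exp (x / 2) * Real.exp (-(x / 2)) = 1 := by
    rw [← Real.exp_add]; simp
  nlinarith [Real.exp_pos (-(x / 2)), Real.exp_pos (x / 2)]

theorem hard_mdp_q_gap_risk_seeking
    (γ β ε : ℝ) (hγ : γ ∈ Set.Ioo (0:ℝ) 1) (hβ : β < 0)
    (hε : 0 < ε) (hε' : ε < γ / (40 * |β|) * (1 - Real.exp (-|β| / (1-γ)))) :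
    (γ / |β|) * Real.log
        ((Real.exp (-|β| / (1-γ)) + 8 * ε * |β| / (γ * (Real.exp (|β| / (1-γ)) - 1))) *
            Real.exp (|β| / (1-γ)) +
          1 - (Real.exp (-|β| / (1-γ)) + 8 * ε * |β| / (γ * (Real.exp (|β| / (1-γ)) - 1))))
      - (γ / |β|) * Real.log
          (Real.exp (-|β| / (1-γ)) * Real.exp (|β| / (1-γ)) + 1 - Real.exp (-|β| / (1-γ)))
      > 2 * ε := by
  obtain ⟨hγ0, hγ1⟩ := hγ
  have hb : 0 < |β| := abs_pos.mpr hβ.ne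
  have h1γ : 0 < 1 - γ := by linarith
  rw [show -|β| / (1 - γ) = -(|β| / (1 - γ)) from neg_div _ _] at *
  set c : ℝ := |β| / (1 - γ) with hcdef
  have hc : 0 < c := div_pos hb h1γ
  set E : ℝ := Real.exp c with hEdef
  have hE : 1 < E := by nlinarith [Real.add_one_le_exp c]
  set p : ℝ := Real.exp (-c) with hpdef
  have hp0 : 0 < p := Real.exp_pos _
  have hp1 : p < 1 := by
    rw [hpdef, ← Real.exp_zero]
    exact Real.exp_lt_exp.mpr (by linarith)
  have hpE : p * E = 1 := by
    rw [hpdef, hEdef, ← Real.exp_add]; simp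
  set α : ℝ := 8 * ε * |β| / (γ * (E - 1)) with hαdef
  have hA2 : p * E + 1 - p = 2 - p := by rw [hpE]; ring
  have hαE : α * (E - 1) = 8 * ε * |β| / γ := by
    have hE1 : (0:ℝ) < E - 1 := by linarith
    rw [hαdef]; field_simp
  have hA1 : (p + α) * E + 1 - (p + α) = (2 - p) + 8 * ε * |β| / γ := by
    have : (p + α) * E + 1 - (p + α) = (p * E + 1 - p) + α * (E - 1) := by ring
    rw [this, hA2, hαE]
  rw [hA1, hA2]
  set x : ℝ := 8 * ε * |β| / (γ * (2 - p)) with hxdef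
  have h2p : 1 < 2 - p := by linarith
  have hx0 : 0 < x := by positivity
  have hεb : 40 * (ε * |β|) < γ * (1 - p) := by
    have h40 : 0 < 40 * |β| := by positivity
    rw [div_mul_eq_mul_div, lt_div_iff₀ h40] at hε'
    nlinarith
  have hx1 : x ≤ 1 := by
    rw [hxdef, div_le_one (by positivity)]
    nlinarith
  have hxa : (2 - p) * x = 8 * ε * |β| / γ := by
    rw [hxdef]; field_simp
  have hsplit : (2 - p) + 8 * ε * |β| / γ = (2 - p) * (1 + x) := by
    rw [mul_add, mul_one, hxa]
  rw [hsplit, Real.log_mul (by linarith) (by linarith),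
    show Real.log (2 - p) + Real.log (1 + x) = Real.log (1 + x) + Real.log (2 - p) from add_comm _ _]
  have hlog := half_le_log_aux x hx0.le hx1
  have hkey : 2 * ε < γ / |β| * (x / 2) := by
    rw [hxdef]
    rw [show γ / |β| * (8 * ε * |β| / (γ * (2 - p)) / 2) = 4 * ε / (2 - p) by
      field_simp; ring]
    rw [lt_div_iff₀ (by linarith)]
    nlinarith
  have hmono : γ / |β| * (x / 2) ≤ γ / |β| * Real.log (1 + x) := by
    apply mul_le_mul_of_nonneg_left hlog (by positivity)
  nlinarith [hmono, hkey]
end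

section
/- Suboptimality gap in the hard MDP for policy learning (risk-averse case): let γ ∈ (0,1), β > 0, p = 1 - exp(-β/(1-γ)), α = 5βε/(γ·(exp(β/(1-γ)) - 1)) with 0 < ε < (γ/(50β))·(1 - exp(-β/(1-γ))). For q ∈ [0,1] define V(q) = -(γ/β)·log(q·exp(-β/(1-γ)) + 1 - q). Then V(p+2α) - V(p+α) > ε. -/
set_option maxHeartbeats 800000

theorem hard_mdp_policy_gap_risk_averse
    (γ β ε : ℝ) (hγ : γ ∈ Set.Ioo (0:ℝ) 1) (hβ : 0 < β)
    (hε : 0 < ε) (hε' : ε < γ / (50 * β) * (1 - Real.exp (-β / (1-γ)))) :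
    -(γ / β) * Real.log
        (((1 - Real.exp (-β / (1-γ))) + 2 * (5 * β * ε / (γ * (Real.exp (β / (1-γ)) - 1)))) *
            Real.exp (-β / (1-γ)) +
          1 - ((1 - Real.exp (-β / (1-γ))) + 2 * (5 * β * ε / (γ * (Real.exp (β / (1-γ)) - 1)))))
      - (-(γ / β) * Real.log
          (((1 - Real.exp (-β / (1-γ))) + 5 * β * ε / (γ * (Real.exp (β / (1-γ)) - 1))) *
              Real.exp (-β / (1-γ)) +
            1 - ((1 - Real.exp (-β / (1-γ))) + 5 * β * ε / (γ * (Real.exp (β / (1-γ)) - 1)))))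
      > ε := by
  obtain ⟨hγ0, hγ1⟩ := hγ
  have h1γ : (0:ℝ) < 1 - γ := by linarith
  set E := Real.exp (-β / (1-γ)) with hEdef
  have hE0 : 0 < E := Real.exp_pos _
  have hE1 : E < 1 := by
    rw [hEdef, Real.exp_lt_one_iff]
    have : 0 < β / (1-γ) := div_pos hβ h1γ
    rw [neg_div]; linarith
  have hexp : Real.exp (β / (1-γ)) = E⁻¹ := by
    rw [hEdef, neg_div, Real.exp_neg, inv_inv]
  set a := 5 * β * ε / (γ * (Real.exp (β / (1-γ)) - 1)) with hadef
  have hEinv1 : (1:ℝ) < E⁻¹ := (one_lt_inv₀ hE0).mpr hE1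
  have ha0 : 0 < a := by
    rw [hadef, hexp]
    apply div_pos (by positivity)
    apply mul_pos hγ0; linarith
  have hden : (0:ℝ) < γ * (E⁻¹ - 1) := mul_pos hγ0 (by linarith)
  have key : a * (1 - E) = 5 * β * ε * E / γ := by
    rw [hadef, hexp, div_mul_eq_mul_div, div_eq_div_iff (ne_of_gt hden) (ne_of_gt hγ0)]
    field_simp
  -- bound on a*(1-E)
  have hε2 : 50 * β * ε < γ * (1 - E) := by
    have h50 : (0:ℝ) < 50 * β := by linarith
    rw [div_mul_eq_mul_div, lt_div_iff₀ h50] at hε'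
    linarith
  have hεE : 5 * β * ε * E / γ < E * (1 - E) / 10 := by
    rw [div_lt_div_iff₀ hγ0 (by norm_num)]
    nlinarith [mul_lt_mul_of_pos_right hε2 hE0]
  have ha1E : a * (1 - E) < E * (1 - E) / 10 := by rw [key]; exact hεE
  have ha1E0 : 0 < a * (1 - E) := mul_pos ha0 (by linarith)
  set A1 := 1 - ((1 - E) + a) * (1 - E) with hA1def
  set A2 := 1 - ((1 - E) + 2*a) * (1 - E) with hA2def
  have hA1E : E < A1 := by nlinarith
  have hA1lt : A1 < 5 * E := by nlinarith
  have hA10 : 0 < A1 := lt_trans hE0 hA1E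
  have hA20 : 0 < A2 := by nlinarith
  set x := a * (1 - E) / A1 with hxdef
  have hx0 : 0 < x := div_pos ha1E0 hA10
  have hx1 : x < 1 := by
    rw [hxdef, div_lt_one hA10]; nlinarith
  have hA2eq : A2 = A1 * (1 - x) := by
    rw [hxdef]; field_simp; ring
  -- rewrite the log arguments
  have arg2 : ((1 - E) + 2 * a) * E + 1 - ((1 - E) + 2 * a) = A2 := by rw [hA2def]; ring
  have arg1 : ((1 - E) + a) * E + 1 - ((1 - E) + a) = A1 := by rw [hA1def]; ring
  rw [arg2, arg1]
  have hlog : Real.log A2 = Real.log A1 + Real.log (1 - x) := by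
    rw [hA2eq, Real.log_mul (ne_of_gt hA10) (by linarith)]
  rw [hlog]
  -- -log(1-x) > x
  have hlogx : Real.log (1 - x) < -x := by
    rw [Real.log_lt_iff_lt_exp (by linarith)]
    have := Real.add_one_lt_exp (x := -x) (by linarith)
    linarith
  have hγβ : 0 < γ / β := div_pos hγ0 hβ
  have hgoal : (γ / β) * x > ε := by
    have hval : (γ / β) * (a * (1 - E)) = 5 * ε * E := by
      rw [key]; field_simp
    rw [hxdef, mul_div_assoc'] at *
    rw [show γ / β * (a * (1 - E)) / A1 = (γ / β * (a * (1 - E))) / A1 from rfl, hval]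
    rw [gt_iff_lt, lt_div_iff₀ hA10]
    nlinarith
  calc ε < (γ / β) * x := hgoal
    _ ≤ (γ / β) * (-Real.log (1 - x)) := by
        apply mul_le_mul_of_nonneg_left (by linarith) (le_of_lt hγβ)
    _ = -(γ / β) * (Real.log A1 + Real.log (1 - x)) - -(γ / β) * Real.log A1 := by ring
end
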